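/- In a finite Dung argumentation framework, every semi-stable extension (a complete extension whose range B ∪ B⁺ is maximal w.r.t. set inclusion among complete extensions) is a preferred extension. -/

import Mathlib

def conflictFree {Args : Type*} (R : Args → Args → Prop) (B : Set Args) : Prop :=
  ∀ a ∈ B, ∀ b ∈ B, ¬ R a b

def defends {Args : Type*} (R : Args → Args → Prop) (B : Set Args) (b : Args) : Prop :=
  ∀ a, R a b → ∃ c ∈ B, R c a

def admissible {Args : Type*} (R : Args → Args → Prop) (B : Set Args) : Prop :=
  conflictFree R B ∧ ∀ b ∈ B, defends R B b

def complete {Args : Type*} (R : Args → Args → Prop) (B : Set Args) : Prop :=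
  admissible R B ∧ ∀ b, defends R B b → b ∈ B

def preferred {Args : Type*} (R : Args → Args → Prop) (B : Set Args) : Prop :=
  admissible R B ∧ ∀ C, admissible R C → B ⊆ C → B = C

def plusSet {Args : Type*} (R : Args → Args → Prop) (B : Set Args) : Set Args :=
  {a | ∃ b ∈ B, R b a}

def semiStable {Args : Type*} (R : Args → Args → Prop) (B : Set Args) : Prop :=
  complete R B ∧
    ∀ C, complete R C → (B ∪ plusSet R B) ⊆ (C ∪ plusSet R C) →
      (B ∪ plusSet R B) = (C ∪ plusSet R C)

/-!
Extend an admissible `C ⊇ B` to a preferred extension `D` by Zorn's lemma (unions of chains of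
admissible sets are admissible); by Dung's fundamental lemma `D` is complete. Then `B ⊆ D`
gives `B ∪ B⁺ ⊆ D ∪ D⁺`, so the two ranges are equal by semi-stability. Every `c ∈ D` then lies
in `B ∪ B⁺`, and it cannot be attacked from `B ⊆ D` because `D` is conflict-free; so `c ∈ B`,
and `B = C = D`.
-/

section Argumentation

variable {Args : Type*} {R : Args → Args → Prop}

theorem defends.mono {C D : Set Args} {b : Args} (hb : defends R C b) (hCD : C ⊆ D) :
    defends R D b := fun a hab =>
  let ⟨c, hc, hca⟩ := hb a hab
  ⟨c, hCD hc, hca⟩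

theorem complete.admissible {B : Set Args} (hB : complete R B) : admissible R B := hB.1

theorem complete.conflictFree {B : Set Args} (hB : complete R B) : conflictFree R B := hB.1.1

theorem preferred.admissible {B : Set Args} (hB : preferred R B) : admissible R B := hB.1

/-- Dung's fundamental lemma. -/
theorem admissible.insert_of_defends {C : Set Args} {b : Args} (hC : admissible R C)
    (hb : defends R C b) : admissible R (insert b C) := by
  obtain ⟨hcf, hdef⟩ := hC
  have not_attacks : ∀ a ∈ C, ∀ x, defends R C x → ¬ R x a := fun a ha x hx hxa =>
    let ⟨d, hd, hdx⟩ := hdef a ha x hxa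
    let ⟨e, he, hed⟩ := hx d hdx
    hcf e he d hd hed
  have not_attacked : ∀ a ∈ C, ∀ x, defends R C x → ¬ R a x := fun a ha x hx hax =>
    let ⟨d, hd, hda⟩ := hx a hax
    hcf d hd a ha hda
  refine ⟨?_, ?_⟩
  · rintro a (rfl | ha) c (rfl | hc) hac
    · obtain ⟨d, hd, hdb⟩ := hb _ hac
      exact not_attacked d hd _ hb hdb
    · exact not_attacks c hc a hb hac
    · exact not_attacked a ha _ hb hac
    · exact hcf a ha c hc hac
  · rintro x (rfl | hx)
    · exact hb.mono (Set.subset_insert _ _)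
    · exact (hdef x hx).mono (Set.subset_insert _ _)

theorem admissible_sUnion_of_isChain {c : Set (Set Args)} (hchain : IsChain (· ⊆ ·) c)
    (hc : ∀ S ∈ c, admissible R S) : admissible R (⋃₀ c) := by
  refine ⟨?_, ?_⟩
  · rintro a ⟨S, hS, haS⟩ b ⟨T, hT, hbT⟩
    obtain ⟨U, hU, hSU, hTU⟩ := hchain.directedOn S hS T hT
    exact (hc U hU).1 a (hSU haS) b (hTU hbT)
  · rintro b ⟨S, hS, hbS⟩
    exact ((hc S hS).2 b hbS).mono (Set.subset_sUnion_of_mem hS)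

theorem preferred.complete {D : Set Args} (hD : preferred R D) : complete R D := by
  refine ⟨hD.admissible, fun b hb => ?_⟩
  rw [hD.2 _ (hD.admissible.insert_of_defends hb) (Set.subset_insert b D)]
  exact Set.mem_insert b D

theorem admissible.exists_preferred_superset {C : Set Args} (hC : admissible R C) :
    ∃ D, preferred R D ∧ C ⊆ D := by
  obtain ⟨D, hCD, hD⟩ := zorn_subset_nonempty {S | admissible R S}
    (fun c hcS hchain _ => ⟨⋃₀ c, admissible_sUnion_of_isChain hchain hcS,
      fun _ => Set.subset_sUnion_of_mem⟩) C hC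
  exact ⟨D, ⟨hD.prop, fun E hE hDE => hDE.antisymm (hD.2 hE hDE)⟩, hCD⟩

theorem union_plusSet_mono {B D : Set Args} (hBD : B ⊆ D) :
    B ∪ plusSet R B ⊆ D ∪ plusSet R D := by
  rintro x (hx | ⟨b, hb, hbx⟩)
  · exact Or.inl (hBD hx)
  · exact Or.inr ⟨b, hBD hb, hbx⟩

theorem conflictFree.subset_of_union_plusSet_subset {B D : Set Args} (hD : conflictFree R D)
    (hBD : B ⊆ D) (hrange : D ∪ plusSet R D ⊆ B ∪ plusSet R B) : D ⊆ B := by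
  intro c hc
  rcases hrange (Or.inl hc) with hcB | ⟨b, hb, hbc⟩
  · exact hcB
  · exact absurd hbc (hD b (hBD hb) c hc)

end Argumentation

theorem semiStable_is_preferred_general
    {Args : Type*} (R : Args → Args → Prop) (B : Set Args)
    (h : semiStable R B) : preferred R B := by
  obtain ⟨hB, hmax⟩ := h
  refine ⟨hB.admissible, fun C hC hBC => ?_⟩
  obtain ⟨D, hD, hCD⟩ := hC.exists_preferred_superset
  have hBD : B ⊆ D := hBC.trans hCD
  have hrange : B ∪ plusSet R B = D ∪ plusSet R D :=
    hmax D hD.complete (union_plusSet_mono hBD)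
  have hDB : D ⊆ B := hD.complete.conflictFree.subset_of_union_plusSet_subset hBD hrange.ge
  exact hBC.antisymm (hCD.trans hDB)

theorem semiStable_is_preferred
    {Args : Type*} [Fintype Args] (R : Args → Args → Prop) (B : Set Args)
    (h : semiStable R B) : preferred R B :=
  semiStable_is_preferred_general R B h
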